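/- A d×d unitary matrix M lies in the set {H + c·i·I : H Hermitian, c ∈ ℝ} if and only if M is unitarily diagonalizable with all eigenvalues in the two-element set {e^{iα}, −e^{−iα}} for some α ∈ [0, 2π). -/

import Mathlib

open Matrix Real

/-!
The eigenvector unitary `U` of `H` diagonalizes `H + c i I` with eigenvalues `λⱼ + c i`.
Unitarity puts them on the unit circle, which the line `Im z = c` meets in `e^{iα}` and
`-e^{-iα}` for `α = arcsin c`, moved into `[0, 2π)`. Conversely, both `e^{iα}` and `-e^{-iα}`
have imaginary part `sin α`, so `Q diag(f) Qᴴ - (sin α) i I = Q diag(± cos α) Qᴴ` is Hermitian.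
-/

lemma Real.exists_mem_Ico_sin_eq {c : ℝ} (hc₁ : -1 ≤ c) (hc₂ : c ≤ 1) :
    ∃ α ∈ Set.Ico 0 (2 * π), sin α = c :=
  ⟨toIcoMod two_pi_pos 0 (arcsin c), toIcoMod_mem_Ico' _ _,
    (sin_periodic.sub_zsmul_eq _).trans (sin_arcsin hc₁ hc₂)⟩

namespace Complex

lemma exp_I_mul_ofReal (α : ℝ) : exp (I * α) = ↑(Real.cos α) + ↑(Real.sin α) * I := by
  rw [mul_comm, exp_mul_I, ofReal_cos, ofReal_sin]

lemma neg_exp_neg_I_mul_ofReal (α : ℝ) :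
    -exp (-(I * α)) = -↑(Real.cos α) + ↑(Real.sin α) * I := by
  rw [← mul_neg, ← ofReal_neg, exp_I_mul_ofReal, Real.cos_neg, Real.sin_neg]
  push_cast
  ring

lemma im_eq_sin_of_eq_exp_or_neg_exp_neg {z : ℂ} {α : ℝ}
    (hz : z = exp (I * α) ∨ z = -exp (-(I * α))) : z.im = Real.sin α := by
  rcases hz with rfl | rfl
  · simp [exp_I_mul_ofReal, sin_ofReal_re]
  · simp [neg_exp_neg_I_mul_ofReal, sin_ofReal_re]

lemma exists_angle_eq_exp_or_neg_exp_neg_of_im_eq (c : ℝ) :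
    ∃ α ∈ Set.Ico 0 (2 * π), ∀ z : ℂ, z.im = c → ‖z‖ = 1 →
      z = exp (I * α) ∨ z = -exp (-(I * α)) := by
  by_cases hc : -1 ≤ c ∧ c ≤ 1
  · obtain ⟨α, hα, hsin⟩ := Real.exists_mem_Ico_sin_eq hc.1 hc.2
    refine ⟨α, hα, fun z hzc hz => ?_⟩
    have hre : z.re ^ 2 = Real.cos α ^ 2 := by
      have := Complex.sq_norm z
      rw [hz, normSq_apply, hzc] at this
      nlinarith [Real.sin_sq_add_cos_sq α]
    rw [exp_I_mul_ofReal, neg_exp_neg_I_mul_ofReal, hsin]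
    rcases sq_eq_sq_iff_eq_or_eq_neg.mp hre with h | h
    · left; apply ext <;> simp [h, hzc, cos_ofReal_re]
    · right; apply ext <;> simp [h, hzc, cos_ofReal_re]
  · refine ⟨0, ⟨le_rfl, two_pi_pos⟩, fun z hzc hz => absurd ?_ hc⟩
    exact abs_le.mp (hzc ▸ hz ▸ abs_im_le_norm z)

end Complex

namespace Matrix

variable {n R : Type*} [Fintype n] [DecidableEq n] [CommRing R] [StarRing R]

lemma diagonal_mem_unitaryGroup_iff {f : n → R} :
    diagonal f ∈ unitaryGroup n R ↔ ∀ i, f i ∈ unitary R := by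
  simp only [mem_unitaryGroup_iff, star_eq_conjTranspose, diagonal_conjTranspose,
    diagonal_mul_diagonal, ← diagonal_one, diagonal_eq_diagonal_iff, Unitary.mem_iff_self_mul_star,
    Pi.star_apply]

lemma mem_unitaryGroup_of_mul_mul_conjTranspose {Q A : Matrix n n R}
    (hQ : Q ∈ unitaryGroup n R) (h : Q * A * Qᴴ ∈ unitaryGroup n R) : A ∈ unitaryGroup n R := by
  have hQQ : Qᴴ * Q = 1 := mem_unitaryGroup_iff'.mp hQ
  have hA : Qᴴ * (Q * A * Qᴴ) * Q = A := by
    simp only [Matrix.mul_assoc, hQQ, Matrix.mul_one, ← Matrix.mul_assoc Qᴴ Q, Matrix.one_mul]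
  exact hA ▸ mul_mem (mul_mem (Unitary.star_mem hQ) h) hQ

lemma mul_add_smul_one_mul_conjTranspose {Q : Matrix n n R} (hQ : Q ∈ unitaryGroup n R)
    (A : Matrix n n R) (s : R) : Q * (A + s • 1) * Qᴴ = Q * A * Qᴴ + s • 1 := by
  rw [Matrix.mul_add, Matrix.add_mul, mul_smul_comm, Matrix.mul_one, smul_mul_assoc,
    ← star_eq_conjTranspose, mem_unitaryGroup_iff.mp hQ]

end Matrix

theorem stmt_13 {d : ℕ} (M : Matrix (Fin d) (Fin d) ℂ)
    (hM : M ∈ Matrix.unitaryGroup (Fin d) ℂ) :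
    (∃ (H : Matrix (Fin d) (Fin d) ℂ) (c : ℝ), H.IsHermitian ∧
        M = H + ((c : ℂ) * Complex.I) • (1 : Matrix (Fin d) (Fin d) ℂ)) ↔
      ∃ α ∈ Set.Ico (0 : ℝ) (2 * π), ∃ Q ∈ Matrix.unitaryGroup (Fin d) ℂ,
        ∃ f : Fin d → ℂ,
          (∀ i, f i = Complex.exp (Complex.I * α) ∨
            f i = -Complex.exp (-(Complex.I * α))) ∧
          M = Q * Matrix.diagonal f * Qᴴ := by
  constructor
  · rintro ⟨H, c, hH, rfl⟩
    set U : Matrix (Fin d) (Fin d) ℂ := ↑hH.eigenvectorUnitary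
    set g : Fin d → ℂ := fun j => hH.eigenvalues j + c * Complex.I
    have hdiag : H + ((c : ℂ) * Complex.I) • 1 = U * diagonal g * Uᴴ := by
      have hshift :
          diagonal g = diagonal (RCLike.ofReal ∘ hH.eigenvalues) + ((c : ℂ) * Complex.I) • 1 := by
        rw [smul_one_eq_diagonal, diagonal_add]; rfl
      rw [hshift, mul_add_smul_one_mul_conjTranspose hH.eigenvectorUnitary.2]
      conv_lhs => rw [hH.spectral_theorem]
      rfl
    have hg : ∀ j, g j ∈ unitary ℂ := diagonal_mem_unitaryGroup_iff.mp <|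
      mem_unitaryGroup_of_mul_mul_conjTranspose hH.eigenvectorUnitary.2 (hdiag ▸ hM)
    obtain ⟨α, hα, hcircle⟩ := Complex.exists_angle_eq_exp_or_neg_exp_neg_of_im_eq c
    exact ⟨α, hα, U, hH.eigenvectorUnitary.2, g,
      fun j => hcircle _ (by simp [g]) (CStarRing.norm_of_mem_unitary (hg j)), hdiag⟩
  · rintro ⟨α, -, Q, hQ, f, hf, rfl⟩
    refine ⟨Q * diagonal (fun j => f j - Real.sin α * Complex.I) * Qᴴ, Real.sin α,
      isHermitian_mul_mul_conjTranspose _ (isHermitian_diagonal_iff.mpr fun j => ?_), ?_⟩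
    · rw [isSelfAdjoint_iff, Complex.star_def, Complex.conj_eq_iff_im]
      simp [Complex.im_eq_sin_of_eq_exp_or_neg_exp_neg (hf j), Complex.sin_ofReal_re]
    · rw [← mul_add_smul_one_mul_conjTranspose hQ, smul_one_eq_diagonal, diagonal_add]
      simp
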